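/- For every 0 ≤ i ≤ n−1, the cyclic map τ acts on the fundamental weights by τ(Λ_i) = Λ_{(i+1) mod n} − ((n−1−2i)/(2n)) c; in particular τ(c) = c and τ^n = id. -/

import Mathlib

/-!
Expanding `h i` in the basis `(Λ, c)` dual to `(h, d)` gives
`h i = 2 Λ i - Λ (i + 1) - Λ (i - 1) + δ_{i0} c`: the Cartan matrix is the discrete Laplacian of
the cycle `ℤ/n`. Applying `τ`, the families `τ (Λ i)` and `Λ (i + 1) - t_i c`, with
`t_i = (n - 1 - 2i)/(2n)`, have the same Laplacian and, since `τ ρ = ρ`, the same sum. The Laplacian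
of the cycle only kills constant families, so a family is determined by its Laplacian and its sum.
The same argument shows that `τ ^ n`, which fixes every `h i`, `c` and `ρ`, fixes every `Λ i`, hence
is the identity.
-/

noncomputable section

/-- The Cartan matrix of affine type `A^{(1)}_{n-1}` (with the convention
`a₀₁ = a₁₀ = -2` when `n = 2`). -/
def cartanA1 (n : ℕ) [NeZero n] (i j : Fin n) : ℂ :=
  (if i = j then 2 else 0) + (if i + 1 = j then -1 else 0) + (if j + 1 = i then -1 else 0)

open Finset

section Cycle

variable {n : ℕ} [NeZero n]

theorem Fin.apply_eq_apply_zero_of_forall_add_one {α : Type*} {f : Fin n → α}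
    (hf : ∀ i, f (i + 1) = f i) (i : Fin n) : f i = f 0 := by
  obtain ⟨m, rfl⟩ : ∃ m, n = m + 1 := Nat.exists_eq_succ_of_ne_zero (NeZero.ne n)
  induction i using Fin.induction with
  | zero => rfl
  | succ i ih => rw [← Fin.coeSucc_eq_succ, hf, ih]

theorem Fin.sum_comp_add_one {M : Type*} [AddCommMonoid M] (v : Fin n → M) :
    ∑ i, v (i + 1) = ∑ i, v i :=
  Equiv.sum_comp (Equiv.addRight (1 : Fin n)) v

theorem Fin.sum_eq_nsmul_of_forall_add_one {M : Type*} [AddCommMonoid M] {v : Fin n → M}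
    (hv : ∀ i, v (i + 1) = v i) : ∑ i, v i = n • v 0 := by
  simp [Fin.apply_eq_apply_zero_of_forall_add_one hv]

open Fin.NatCast in
theorem Module.End.pow_apply_eq_self_of_apply_eq_add_one {R M : Type*} [Semiring R]
    [AddCommMonoid M] [Module R M] {f : Module.End R M} {v : Fin n → M}
    (hf : ∀ i, f (v i) = v (i + 1)) (i : Fin n) : (f ^ n) (v i) = v i := by
  have hiter : ∀ k, (f ^ k) (v i) = v ((· + 1)^[k] i) := by
    intro k
    induction k with
    | zero => rfl
    | succ k ih => rw [pow_succ', Module.End.mul_apply, ih, hf, Function.iterate_succ_apply']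
  rw [hiter, add_right_iterate_apply, nsmul_one, Fin.natCast_self, add_zero]

end Cycle

section CyclicLaplacian

variable {M : Type*} [AddCommGroup M] {n : ℕ} [NeZero n]

def cyclicLaplacian (v : Fin n → M) (i : Fin n) : M := 2 • v i - v (i + 1) - v (i - 1)

theorem eq_zero_of_cyclicLaplacian_eq_zero (K : Type*) [DivisionRing K] [CharZero K] [Module K M]
    {E : Fin n → M} (hE : cyclicLaplacian E = 0) (hsum : ∑ i, E i = 0) : E = 0 := by
  have cancel : ∀ a : M, n • a = 0 → a = 0 := fun a ha => by
    rw [← Nat.cast_smul_eq_nsmul K] at ha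
    exact (smul_eq_zero.1 ha).resolve_left (Nat.cast_ne_zero.2 (NeZero.ne n))
  -- the increments `E (i + 1) - E i` are constant and sum to zero
  have hinc : ∀ i, E (i + 1 + 1) - E (i + 1) = E (i + 1) - E i := fun i => by
    have := congrFun hE (i + 1)
    rw [cyclicLaplacian, add_sub_cancel_right, Pi.zero_apply] at this
    linear_combination (norm := module) -this
  have hinc_zero : E (0 + 1) - E 0 = 0 := by
    refine cancel _ ?_
    rw [← Fin.sum_eq_nsmul_of_forall_add_one (v := fun i => E (i + 1) - E i) hinc,
      sum_sub_distrib, Fin.sum_comp_add_one, sub_self]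
  have hstep : ∀ i, E (i + 1) = E i := fun i => by
    rw [← sub_eq_zero,
      Fin.apply_eq_apply_zero_of_forall_add_one (f := fun i => E (i + 1) - E i) hinc]
    exact hinc_zero
  funext i
  rw [Fin.apply_eq_apply_zero_of_forall_add_one hstep]
  exact cancel _ (by rw [← Fin.sum_eq_nsmul_of_forall_add_one hstep, hsum])

end CyclicLaplacian

theorem sum_cartanA1_smul {M : Type*} [AddCommGroup M] [Module ℂ M] {n : ℕ} [NeZero n]
    (v : Fin n → M) (i : Fin n) : ∑ j, cartanA1 n i j • v j = cyclicLaplacian v i := by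
  have hpred : ∀ j : Fin n, (j + 1 = i) = (j = i - 1) := fun j => propext eq_sub_iff_add_eq.symm
  simp only [cartanA1, hpred, add_smul, ite_smul, zero_smul, sum_add_distrib, sum_ite_eq,
    sum_ite_eq', mem_univ, if_true, cyclicLaplacian]
  module

def weightShift (K : Type*) [Field K] (n : ℕ) (i : Fin n) : K :=
  ((n : K) - 1 - 2 * (i : ℕ)) / (2 * n)

theorem sum_weightShift (K : Type*) [Field K] [CharZero K] (n : ℕ) [NeZero n] :
    ∑ i, weightShift K n i = 0 := by
  have hpartial : ∀ m, ∑ i ∈ range m, ((n : K) - 1 - 2 * i) = m * (n - m) := fun m => by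
    induction m with
    | zero => simp
    | succ m ih => rw [sum_range_succ, ih]; push_cast; ring
  unfold weightShift
  rw [Fin.sum_univ_eq_sum_range (fun i => ((n : K) - 1 - 2 * i) / (2 * n)), ← sum_div, hpartial]
  simp

theorem cyclicLaplacian_weightShift (K : Type*) [Field K] [CharZero K] (n : ℕ) [NeZero n]
    (i : Fin n) :
    cyclicLaplacian (weightShift K n) i =
      (if i = 0 then 1 else 0) - (if i + 1 = 0 then 1 else 0) := by
  obtain ⟨m, rfl⟩ : ∃ m, n = m + 1 := Nat.exists_eq_succ_of_ne_zero (NeZero.ne n)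
  simp only [cyclicLaplacian, weightShift, Fin.ext_iff, Fin.val_add_one, Fin.coe_sub_one,
    Fin.val_zero, Fin.val_last]
  split_ifs <;> simp_all [Nat.cast_sub, Nat.one_le_iff_ne_zero] <;> field_simp <;> ring

section Rotation

variable {K M : Type*} [Field K] [CharZero K] [AddCommGroup M] [Module K M] {n : ℕ} [NeZero n]
  {h Λ : Fin n → M} {c : M} {f : M →ₗ[K] M}

theorem map_weight_eq_of_rotates_coroots
    (hlap : ∀ i, cyclicLaplacian Λ i = h i - (if i = 0 then 1 else 0 : K) • c)
    (hfc : f c = c) (hfh : ∀ i, f (h i) = h (i + 1)) (hfΛ : f (∑ i, Λ i) = ∑ i, Λ i)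
    (i : Fin n) : f (Λ i) = Λ (i + 1) - weightShift K n i • c := by
  suffices (fun i => f (Λ i)) = fun i => Λ (i + 1) - weightShift K n i • c from congrFun this i
  rw [← sub_eq_zero]
  apply eq_zero_of_cyclicLaplacian_eq_zero K
  · funext i
    have hflap := congrArg f (hlap i)
    simp only [cyclicLaplacian, map_sub, map_nsmul, map_smul, hfc, hfh] at hflap
    have hlap_succ := hlap (i + 1)
    simp only [cyclicLaplacian, add_sub_cancel_right] at hlap_succ
    have hw := cyclicLaplacian_weightShift K n i
    simp only [cyclicLaplacian] at hw
    simp only [cyclicLaplacian, Pi.sub_apply, Pi.zero_apply, sub_add_cancel]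
    linear_combination (norm := module) hflap - hlap_succ + hw • c
  · simp only [Pi.sub_apply, sum_sub_distrib, ← sum_smul, ← map_sum, hfΛ,
      Fin.sum_comp_add_one Λ, sum_weightShift, zero_smul, sub_zero, sub_self]

theorem map_weight_eq_self_of_fixes_coroots
    (hlap : ∀ i, cyclicLaplacian Λ i = h i - (if i = 0 then 1 else 0 : K) • c)
    (hfc : f c = c) (hfh : ∀ i, f (h i) = h i) (hfΛ : f (∑ i, Λ i) = ∑ i, Λ i) (i : Fin n) :
    f (Λ i) = Λ i := by
  suffices (fun i => f (Λ i)) = Λ from congrFun this i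
  rw [← sub_eq_zero]
  apply eq_zero_of_cyclicLaplacian_eq_zero K
  · funext i
    have hflap := congrArg f (hlap i)
    simp only [cyclicLaplacian, map_sub, map_nsmul, map_smul, hfc, hfh] at hflap
    have hlapi := hlap i
    simp only [cyclicLaplacian] at hlapi
    simp only [cyclicLaplacian, Pi.sub_apply, Pi.zero_apply]
    linear_combination (norm := module) hflap - hlapi
  · simp only [Pi.sub_apply]
    rw [sum_sub_distrib, ← map_sum, hfΛ, sub_self]

end Rotation

theorem eq_sum_smul_of_isDual {K V ι : Type*} [Field K] [AddCommGroup V] [Module K V] [Fintype ι]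
    [DecidableEq ι] (B : V →ₗ[K] V →ₗ[K] K) (b : Module.Basis ι K V) (w : ι → V)
    (hw : ∀ i j, B (w i) (b j) = if i = j then 1 else 0) (x : V) :
    x = ∑ j, B x (b j) • w j := by
  have : FiniteDimensional K V := Module.Finite.of_basis b
  have hB : ∀ g : ι → K, ∀ j, B (∑ i, g i • w i) (b j) = g j := fun g j => by
    simp [hw]
  have hli : LinearIndependent K w := Fintype.linearIndependent_iff.2 fun g hg i => by
    simpa [hg] using (hB g i).symm
  have hspan := hli.span_eq_top_of_card_eq_finrank' (Module.finrank_eq_card_basis b).symm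
  obtain ⟨g, rfl⟩ :=
    (Submodule.mem_span_range_iff_exists_fun K).1 (hspan ▸ Submodule.mem_top (x := x))
  simp only [hB]

theorem eq_sum_smul_fundamentalWeights {n : ℕ} {H : Type*} [AddCommGroup H] [Module ℂ H]
    (B : H →ₗ[ℂ] H →ₗ[ℂ] ℂ) (h : Fin n → H) (d : H) (Λ : Fin n → H) (c : H)
    (bas : Module.Basis (Fin (n + 1)) ℂ H)
    (hbash : ∀ i : Fin n, bas i.castSucc = h i) (hbasd : bas (Fin.last n) = d)
    (hΛh : ∀ i j : Fin n, B (Λ i) (h j) = if i = j then 1 else 0)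
    (hΛd : ∀ i : Fin n, B (Λ i) d = 0) (hch : ∀ j : Fin n, B c (h j) = 0) (hcd : B c d = 1)
    (x : H) : x = ∑ j, B x (h j) • Λ j + B x d • c := by
  have hdual :
      ∀ i j, B ((Fin.snoc Λ c : Fin (n + 1) → H) i) (bas j) = if i = j then 1 else 0 := by
    intro i j
    induction i using Fin.lastCases <;> induction j using Fin.lastCases <;>
      simp [hbash, hbasd, hΛh, hΛd, hch, hcd, Fin.castSucc_ne_last, (Fin.castSucc_ne_last _).symm]
  conv_lhs => rw [eq_sum_smul_of_isDual B bas _ hdual x]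
  simp [Fin.sum_univ_castSucc, hbash, hbasd]

theorem tau_on_fundamental_weights_general (n : ℕ) [NeZero n]
    (H : Type*) [AddCommGroup H] [Module ℂ H]
    (B : H →ₗ[ℂ] H →ₗ[ℂ] ℂ)
    (h : Fin n → H) (d : H) (Λ : Fin n → H) (c ρ : H)
    (bas : Module.Basis (Fin (n + 1)) ℂ H)
    (hbash : ∀ i : Fin n, bas i.castSucc = h i)
    (hbasd : bas (Fin.last n) = d)
    (hhh : ∀ i j : Fin n, B (h i) (h j) = cartanA1 n i j)
    (hhd : ∀ i : Fin n, B (h i) d = if i = 0 then 1 else 0)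
    (hΛh : ∀ i j : Fin n, B (Λ i) (h j) = if i = j then 1 else 0)
    (hΛd : ∀ i : Fin n, B (Λ i) d = 0)
    (hch : ∀ j : Fin n, B c (h j) = 0)
    (hcd : B c d = 1)
    (hc : c = ∑ i : Fin n, h i)
    (hρ : ρ = ∑ i : Fin n, Λ i)
    (τ : H →ₗ[ℂ] H)
    (hτh : ∀ i : Fin n, τ (h i) = h (i + 1))
    (hτρ : τ ρ = ρ) :
    (∀ i : Fin n, τ (Λ i) =
      Λ (i + 1) - (((n : ℂ) - 1 - 2 * (i : ℕ)) / (2 * n)) • c) ∧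
    τ c = c ∧ τ ^ n = LinearMap.id := by
  have hexp := eq_sum_smul_fundamentalWeights B h d Λ c bas hbash hbasd hΛh hΛd hch hcd
  have hlap : ∀ i, cyclicLaplacian Λ i = h i - (if i = 0 then 1 else 0 : ℂ) • c := fun i => by
    rw [← sum_cartanA1_smul]
    conv_rhs => rw [hexp (h i)]
    simp only [hhh, hhd, add_sub_cancel_right]
  have hτc : τ c = c := by
    rw [hc, map_sum]
    simp only [hτh]
    exact Fin.sum_comp_add_one h
  subst hρ
  refine ⟨map_weight_eq_of_rotates_coroots hlap hτc hτh hτρ, hτc, LinearMap.ext fun x => ?_⟩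
  have hτnc : (τ ^ n) c = c := by rw [Module.End.pow_apply, Function.iterate_fixed hτc]
  have hτnρ : (τ ^ n) (∑ i, Λ i) = ∑ i, Λ i := by
    rw [Module.End.pow_apply, Function.iterate_fixed hτρ]
  have hτnΛ := map_weight_eq_self_of_fixes_coroots hlap hτnc
    (Module.End.pow_apply_eq_self_of_apply_eq_add_one hτh) hτnρ
  rw [LinearMap.id_apply, hexp x]
  simp only [map_add, map_sum, map_smul, hτnΛ, hτnc]

/-- The cyclic map `τ` acts on the fundamental weights by
`τ(Λ_i) = Λ_{(i+1) mod n} - ((n-1-2i)/(2n)) c`; in particular `τ(c) = c` and `τ^n = id`. -/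
theorem tau_on_fundamental_weights (n : ℕ) [NeZero n] (hn : 2 ≤ n)
    (H : Type*) [AddCommGroup H] [Module ℂ H]
    (B : H →ₗ[ℂ] H →ₗ[ℂ] ℂ) (hBsymm : ∀ x y : H, B x y = B y x)
    (h : Fin n → H) (d : H) (Λ : Fin n → H) (c ρ : H)
    (bas : Module.Basis (Fin (n + 1)) ℂ H)
    (hbash : ∀ i : Fin n, bas i.castSucc = h i)
    (hbasd : bas (Fin.last n) = d)
    (hhh : ∀ i j : Fin n, B (h i) (h j) = cartanA1 n i j)
    (hhd : ∀ i : Fin n, B (h i) d = if i = 0 then 1 else 0)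
    (hdd : B d d = 0)
    (hΛh : ∀ i j : Fin n, B (Λ i) (h j) = if i = j then 1 else 0)
    (hΛd : ∀ i : Fin n, B (Λ i) d = 0)
    (hch : ∀ j : Fin n, B c (h j) = 0)
    (hcd : B c d = 1)
    (hc : c = ∑ i : Fin n, h i)
    (hρ : ρ = ∑ i : Fin n, Λ i)
    (τ : H →ₗ[ℂ] H)
    (hτh : ∀ i : Fin n, τ (h i) = h (i + 1))
    (hτρ : τ ρ = ρ) :
    (∀ i : Fin n, τ (Λ i) =
      Λ (i + 1) - (((n : ℂ) - 1 - 2 * (i : ℕ)) / (2 * n)) • c) ∧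
    τ c = c ∧ τ ^ n = LinearMap.id :=
  tau_on_fundamental_weights_general n H B h d Λ c ρ bas hbash hbasd hhh hhd hΛh hΛd hch hcd hc hρ τ
    hτh hτρ

end
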